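/- For r-partitions λ ≠ μ of size n with ζ(λ) = ζ(μ), one has β_{λμ} = 0. -/

import Mathlib

open scoped BigOperators

namespace CQSA

/-- A box of a multidiagram: component `k`, row `i`, column `j` (0-indexed column). -/
abbrev Box (r : ℕ) (m : Fin r → ℕ) : Type := Σ k : Fin r, Fin (m k) × ℕ

/-- An entry of a tableau: component `c`, letter `a` (0-indexed). -/
abbrev Entry (r : ℕ) (m : Fin r → ℕ) : Type := Σ c : Fin r, Fin (m c)

/-- Multicompositions with `m k` parts in component `k`. -/
abbrev MComp (r : ℕ) (m : Fin r → ℕ) : Type := (k : Fin r) → Fin (m k) → ℕ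

variable {r : ℕ} {m : Fin r → ℕ}

/-- The size `|λ|` of a multicomposition. -/
def size (lam : MComp r m) : ℕ := ∑ k, ∑ i, lam k i

/-- A multicomposition is a multipartition if each component is weakly decreasing. -/
def IsMPartition (lam : MComp r m) : Prop := ∀ k, Antitone (lam k)

/-- `ζ(λ) = (|λ^(1)|, …, |λ^(r)|)`. -/
def zeta (lam : MComp r m) : Fin r → ℕ := fun k => ∑ i, lam k i

/-- Dominance order: `mu ⊴ lam`. -/
def DomLE (mu lam : MComp r m) : Prop :=
  ∀ (k : Fin r) (i : Fin (m k)),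
    ((∑ l ∈ Finset.univ.filter (fun l => l < k), ∑ j, mu l j) +
        ∑ j ∈ Finset.univ.filter (fun j => j ≤ i), mu k j) ≤
      ((∑ l ∈ Finset.univ.filter (fun l => l < k), ∑ j, lam l j) +
        ∑ j ∈ Finset.univ.filter (fun j => j ≤ i), lam k j)

/-- Membership of a box in the diagram `[λ]`. -/
def InDiag (lam : MComp r m) (x : Box r m) : Prop := x.2.2 < lam x.1 x.2.1

/-- The skew diagram `[λ] \ [ν]` as a predicate on boxes. -/
def SkewD (lamBig lamSmall : MComp r m) (x : Box r m) : Prop :=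
  InDiag lamBig x ∧ ¬ InDiag lamSmall x

/-- Order on entries: `(a,c) ≤ (a',c')` iff `c < c'`, or `c = c'` and `a ≤ a'`. -/
def entryLE (e f : Entry r m) : Prop :=
  (e.1 : ℕ) < (f.1 : ℕ) ∨ ((e.1 : ℕ) = (f.1 : ℕ) ∧ (e.2 : ℕ) ≤ (f.2 : ℕ))

/-- Strict order on entries. -/
def entryLT (e f : Entry r m) : Prop :=
  (e.1 : ℕ) < (f.1 : ℕ) ∨ ((e.1 : ℕ) = (f.1 : ℕ) ∧ (e.2 : ℕ) < (f.2 : ℕ))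

/-- Reading order on boxes: `x ⪰ y`, i.e. `x ≻ y` or `x = y`, where
`(i,j,k) ≻ (i',j',k')` iff `k > k'`, or `k = k'` and `j > j'`, or
`k = k'`, `j = j'` and `i < i'`. -/
def BoxGE (x y : Box r m) : Prop :=
  (y.1 : ℕ) < (x.1 : ℕ) ∨
    ((x.1 : ℕ) = (y.1 : ℕ) ∧
      (y.2.2 < x.2.2 ∨ (x.2.2 = y.2.2 ∧ (x.2.1 : ℕ) ≤ (y.2.1 : ℕ))))

/-- Semistandardness of a filling `T` of the set of boxes `D` with weight `mu`. -/
structure IsSST (D : Box r m → Prop) (mu : MComp r m)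
    (T : {x : Box r m // D x} → Entry r m) : Prop where
  comp_le : ∀ x : {x : Box r m // D x}, (x.1.1 : ℕ) ≤ ((T x).1 : ℕ)
  row_weak : ∀ x y : {x : Box r m // D x},
    x.1.1 = y.1.1 → (x.1.2.1 : ℕ) = (y.1.2.1 : ℕ) → x.1.2.2 + 1 = y.1.2.2 →
      entryLE (T x) (T y)
  col_strict : ∀ x y : {x : Box r m // D x},
    x.1.1 = y.1.1 → (x.1.2.1 : ℕ) + 1 = (y.1.2.1 : ℕ) → x.1.2.2 = y.1.2.2 →
      entryLT (T x) (T y)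
  weight : ∀ e : Entry r m, mu e.1 e.2 = Nat.card {x : {x : Box r m // D x} // T x = e}

/-- Singularity of a tableau: every prefix of the component-`c` reading word has
weakly decreasing content, for every `c`. -/
def IsSingular (D : Box r m → Prop) (T : {x : Box r m // D x} → Entry r m) : Prop :=
  ∀ (b : {x : Box r m // D x}) (a : ℕ),
    Nat.card {y : {x : Box r m // D x} //
        (T y).1 = (T b).1 ∧ BoxGE y.1 b.1 ∧ ((T y).2 : ℕ) = a + 1} ≤
      Nat.card {y : {x : Box r m // D x} //
        (T y).1 = (T b).1 ∧ BoxGE y.1 b.1 ∧ ((T y).2 : ℕ) = a}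

/-- The number of semistandard tableaux on the boxes `D` with weight `mu`. -/
noncomputable def nSST (D : Box r m → Prop) (mu : MComp r m) : ℕ :=
  Nat.card {T : {x : Box r m // D x} → Entry r m // IsSST D mu T}

/-- The number of singular semistandard tableaux on the boxes `D` with weight `mu`. -/
noncomputable def nSingSST (D : Box r m → Prop) (mu : MComp r m) : ℕ :=
  Nat.card {T : {x : Box r m // D x} → Entry r m // IsSST D mu T ∧ IsSingular D T}

/-- `#CT₀(λ,μ)`: the number of semistandard tableaux of shape `λ` and weight `μ`. -/
noncomputable def nCT (lam mu : MComp r m) : ℕ := nSST (InDiag lam) mu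

/-- `β_{λμ}`: the number of singular semistandard tableaux of shape `λ` and weight `μ`. -/
noncomputable def beta (lam mu : MComp r m) : ℕ := nSingSST (InDiag lam) mu


/-- The Kostka number `K_{ν μ}`: the number of ordinary semistandard Young
tableaux of shape `ν` (rows indexed by `ℕ`) and weight `μ` (a finite sequence of
nonnegative integers, indexed by the linearly ordered alphabet `ι`). -/
noncomputable def kostka (nu : ℕ → ℕ) {ι : Type} [LinearOrder ι] (mu : ι → ℕ) : ℕ :=
  Nat.card {T : {x : ℕ × ℕ // x.2 < nu x.1} → ι //
    (∀ x y : {x : ℕ × ℕ // x.2 < nu x.1}, x.1.1 = y.1.1 → x.1.2 + 1 = y.1.2 → T x ≤ T y) ∧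
    (∀ x y : {x : ℕ × ℕ // x.2 < nu x.1}, x.1.1 + 1 = y.1.1 → x.1.2 = y.1.2 → T x < T y) ∧
    (∀ a : ι, mu a = Nat.card {x : {x : ℕ × ℕ // x.2 < nu x.1} // T x = a})}

/-- Extension of a finite tuple by zeros. -/
def extF {L : ℕ} (f : Fin L → ℕ) : ℕ → ℕ := fun i => if h : i < L then f ⟨i, h⟩ else 0

/-- The Schur polynomial of the partition `ν` (of size `d`) in `N` variables:
`s_ν(x_1,…,x_N) = ∑_μ K_{νμ} x^μ`. -/
noncomputable def schurP (N d : ℕ) (nu : ℕ → ℕ) : MvPolynomial (Fin N) ℤ :=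
  ∑ f ∈ (Fintype.piFinset fun _ : Fin N => Finset.range (d + 1)) |>.filter
      (fun f => ∑ i, f i = d),
    (kostka nu f : ℤ) • MvPolynomial.monomial (Finsupp.equivFunOnFinite.symm f) 1

/-- `lr` is the family of Littlewood–Richardson coefficients: for all partitions
`α`, `β`, the product of the Schur polynomials `s_α s_β` (in any number `N` of
variables containing the supports) equals `∑_γ lr α β γ • s_γ`, the sum running
over all partitions `γ` of size `|α| + |β|` with at most `N` parts. -/
noncomputable def IsLR (lr : (ℕ → ℕ) → (ℕ → ℕ) → (ℕ → ℕ) → ℕ) : Prop :=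
  ∀ (N : ℕ) (al be : ℕ → ℕ), Antitone al → Antitone be →
    (∀ i, N ≤ i → al i = 0) → (∀ i, N ≤ i → be i = 0) →
    schurP N (∑ i ∈ Finset.range N, al i) al *
        schurP N (∑ i ∈ Finset.range N, be i) be =
      ∑ g ∈ (Fintype.piFinset fun _ : Fin N =>
            Finset.range ((∑ i ∈ Finset.range N, al i) + (∑ i ∈ Finset.range N, be i) + 1)) |>.filter
          (fun g => (∀ i j : Fin N, i ≤ j → g j ≤ g i) ∧
            ∑ i, g i = (∑ i ∈ Finset.range N, al i) + (∑ i ∈ Finset.range N, be i)),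
        (lr al be (extF g) : ℤ) •
          schurP N ((∑ i ∈ Finset.range N, al i) + (∑ i ∈ Finset.range N, be i)) (extF g)

/-- The polynomial `tS_λ(x) = ∑_μ #CT₀(λ,μ) x^μ`, summed over all
`r`-compositions `μ` of size `d`, in the variables `x^{(k)}_i`. -/
noncomputable def tS (d : ℕ) (lam : MComp r m) : MvPolynomial (Entry r m) ℤ :=
  ∑ f ∈ (Fintype.piFinset fun _ : Entry r m => Finset.range (d + 1)) |>.filter
      (fun f => ∑ e, f e = d),
    (nCT lam (fun k i => f ⟨k, i⟩) : ℤ) •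
      MvPolynomial.monomial (Finsupp.equivFunOnFinite.symm f) 1

/-- `S_μ(x) = ∏_k s_{μ^{(k)}}(x^{(k)})`, the product of Schur polynomials. -/
noncomputable def SchurProd (mu : MComp r m) : MvPolynomial (Entry r m) ℤ :=
  ∏ k : Fin r, MvPolynomial.rename (fun i : Fin (m k) => (⟨k, i⟩ : Entry r m))
    (schurP (m k) (∑ i, mu k i) (extF (mu k)))

/-- Membership in `Θ(λ,μ)`: a chain `λ = λ_{⟨r⟩} ⊇ … ⊇ λ_{⟨0⟩} = ∅` of
`r`-partitions with `(λ_{⟨k⟩})^{(k+1)} = ∅` for `1 ≤ k ≤ r-1` and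
`|λ_{⟨k⟩}| - |λ_{⟨k-1⟩}| = |μ^{(k)}|` for `1 ≤ k ≤ r`. -/
def IsTheta (lam mu : MComp r m) (L : Fin (r + 1) → MComp r m) : Prop :=
  (∀ κ, IsMPartition (L κ)) ∧
  L (Fin.last r) = lam ∧
  (∀ (c : Fin r) (i : Fin (m c)), L 0 c i = 0) ∧
  (∀ (k : Fin r) (c : Fin r) (i : Fin (m c)), L k.castSucc c i ≤ L k.succ c i) ∧
  (∀ (k : ℕ) (h : k < r), 1 ≤ k →
    ∀ i : Fin (m ⟨k, h⟩), L ⟨k, Nat.lt_succ_of_lt h⟩ ⟨k, h⟩ i = 0) ∧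
  (∀ k : Fin r, size (L k.succ) = size (L k.castSucc) + ∑ i, mu k i)

/-- The multicomposition `(∅, …, ∅, w, ∅, …, ∅)` concentrated in component `k`. -/
def unitWeight (k : Fin r) (w : Fin (m k) → ℕ) : MComp r m :=
  fun c i => if h : c = k then w (Fin.cast (congrArg m h) i) else 0

/-- The index in `Fin r` of the `j`-th member of the `k`-th block, for blocks of
sizes `rs 0, …, rs (g-1)` with `∑ rs = r`. -/
def blockIdx {g : ℕ} (rs : Fin g → ℕ) (hsum : ∑ l, rs l = r) (k : Fin g) (j : Fin (rs k)) :
    Fin r :=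
  ⟨(∑ l ∈ Finset.univ.filter (fun l => l < k), rs l) + j, by
    classical
    have hj := j.isLt
    have h1 : (∑ l ∈ Finset.univ.filter (fun l => l < k), rs l) + rs k ≤ ∑ l, rs l := by
      have hk : k ∉ Finset.univ.filter (fun l => l < k) := by simp
      have h2 : (∑ l ∈ insert k (Finset.univ.filter (fun l => l < k)), rs l)
          = (∑ l ∈ Finset.univ.filter (fun l => l < k), rs l) + rs k := by
        rw [Finset.sum_insert hk]; ring
      rw [← h2]
      exact Finset.sum_le_sum_of_subset (Finset.subset_univ _)
    omega⟩

/-- The permutation of the variables `x^{(k)}_i` within the `k`-th set induced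
by `σ ∈ S_{m_k}`. -/
def blockPermFun (k : Fin r) (sg : Equiv.Perm (Fin (m k))) : Entry r m → Entry r m :=
  fun e => if h : e.1 = k then ⟨k, sg (Fin.cast (congrArg m h) e.2)⟩ else e


/-! ### Auxiliary lemmas for `beta_eq_zero_of_zeta_eq` -/

private lemma nat_card_sigma'' {ι : Type} [Fintype ι] (α : ι → Type) [∀ i, Finite (α i)] :
    Nat.card (Σ i, α i) = ∑ i, Nat.card (α i) := by
  classical
  letI : ∀ i, Fintype (α i) := fun i => Fintype.ofFinite _
  simp [Nat.card_eq_fintype_card]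

lemma col_lt_size (lam : MComp r m) (x : {x : Box r m // InDiag lam x}) :
    x.1.2.2 < size lam := by
  obtain ⟨⟨k, i, j⟩, hx⟩ := x
  have h1 : lam k i ≤ ∑ i', lam k i' :=
    Finset.single_le_sum (fun _ _ => Nat.zero_le _) (Finset.mem_univ i)
  have h2 : (∑ i', lam k i') ≤ size lam :=
    Finset.single_le_sum (f := fun k => ∑ i', lam k i')
      (fun _ _ => Nat.zero_le _) (Finset.mem_univ k)
  exact lt_of_lt_of_le hx (le_trans h1 h2)

lemma finite_diag (lam : MComp r m) : Finite {x : Box r m // InDiag lam x} := by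
  apply Finite.of_injective (fun x : {x : Box r m // InDiag lam x} =>
    (⟨x.1.1, x.1.2.1, ⟨x.1.2.2, col_lt_size lam x⟩⟩ : Σ k : Fin r, Fin (m k) × Fin (size lam)))
  intro x y h
  obtain ⟨⟨k, i, j⟩, hx⟩ := x
  obtain ⟨⟨k', i', j'⟩, hy⟩ := y
  apply Subtype.ext
  simp only [Sigma.mk.inj_iff] at h
  obtain ⟨h1, h2⟩ := h
  subst h1
  have h3 := eq_of_heq h2
  simp only [Prod.mk.injEq, Fin.mk.injEq] at h3
  obtain ⟨h4, h5⟩ := h3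
  subst h4
  subst h5
  rfl

lemma box_ext {x y : Box r m} (h1 : (x.1 : ℕ) = (y.1 : ℕ)) (h2 : (x.2.1 : ℕ) = (y.2.1 : ℕ))
    (h3 : x.2.2 = y.2.2) : x = y := by
  obtain ⟨k, i, j⟩ := x
  obtain ⟨k', i', j'⟩ := y
  have hk : k = k' := Fin.val_injective h1
  subst hk
  have hi : i = i' := Fin.val_injective h2
  subst hi
  subst h3
  rfl

lemma entry_ext {e f : Entry r m} (h1 : e.1 = f.1) (h2 : (e.2 : ℕ) = (f.2 : ℕ)) : e = f := by
  obtain ⟨c, a⟩ := e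
  obtain ⟨c', a'⟩ := f
  dsimp at h1 h2
  subst h1
  exact congrArg _ (Fin.val_injective h2)

lemma card_diag_filter (lam : MComp r m) (P : Fin r → Prop) [DecidablePred P] :
    Nat.card {x : Box r m // InDiag lam x ∧ P x.1} =
      ∑ k ∈ Finset.univ.filter P, ∑ i, lam k i := by
  classical
  have e : {x : Box r m // InDiag lam x ∧ P x.1} ≃
      Σ k : Fin r, Σ i : Fin (m k), Fin (if P k then lam k i else 0) :=
    { toFun := fun x => ⟨x.1.1, x.1.2.1, ⟨x.1.2.2, by
        obtain ⟨⟨k, i, j⟩, h1, h2⟩ := x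
        show j < (if P k then lam k i else 0); rw [if_pos h2]; exact h1⟩⟩
      invFun := fun y => ⟨⟨y.1, y.2.1, (y.2.2 : ℕ)⟩, by
        by_cases hp : P y.1
        · exact ⟨lt_of_lt_of_le y.2.2.isLt (le_of_eq (if_pos hp)), hp⟩
        · exact absurd (lt_of_lt_of_le y.2.2.isLt (le_of_eq (if_neg hp)))
            (Nat.not_lt_zero _)⟩
      left_inv := fun x => rfl
      right_inv := fun y => rfl }
  rw [Nat.card_congr e, Nat.card_eq_fintype_card]
  simp only [Fintype.card_sigma, Fintype.card_fin]
  rw [Finset.sum_filter]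
  apply Finset.sum_congr rfl
  intro k _
  by_cases h : P k <;> simp [h]

lemma card_entry_filter (lam mu : MComp r m)
    (T : {x : Box r m // InDiag lam x} → Entry r m)
    (hw : ∀ e : Entry r m, mu e.1 e.2 = Nat.card {x : {x : Box r m // InDiag lam x} // T x = e})
    (P : Fin r → Prop) [DecidablePred P] :
    Nat.card {x : {x : Box r m // InDiag lam x} // P (T x).1} =
      ∑ k ∈ Finset.univ.filter P, ∑ a, mu k a := by
  classical
  haveI := finite_diag lam
  rw [← Nat.card_congr (Equiv.sigmaFiberEquiv
    (fun x : {x : {x : Box r m // InDiag lam x} // P (T x).1} =>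
      (⟨T x.1, x.2⟩ : {e : Entry r m // P e.1})))]
  rw [nat_card_sigma'']
  have hfib : ∀ e : {e : Entry r m // P e.1},
      Nat.card {x : {x : {x : Box r m // InDiag lam x} // P (T x).1} //
        (⟨T x.1, x.2⟩ : {e : Entry r m // P e.1}) = e} = mu e.1.1 e.1.2 := by
    intro e
    rw [hw e.1]
    exact Nat.card_congr
      { toFun := fun x => ⟨x.1.1, congrArg Subtype.val x.2⟩
        invFun := fun y => ⟨⟨y.1, by rw [y.2]; exact e.2⟩, Subtype.ext y.2⟩
        left_inv := fun x => by apply Subtype.ext; apply Subtype.ext; rfl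
        right_inv := fun y => by apply Subtype.ext; rfl }
  simp only [hfib]
  rw [← Finset.sum_subtype (Finset.univ.filter (fun e : Entry r m => P e.1))
      (by intro e; simp) (fun e : Entry r m => mu e.1 e.2)]
  rw [show (Finset.univ.filter (fun e : Entry r m => P e.1)) =
      (Finset.univ.filter P).sigma (fun _ => Finset.univ) from by
    ext ⟨k, a⟩
    simp]
  rw [Finset.sum_sigma]

/-- A rank function realizing the reading order. -/
def rkey (lam : MComp r m) (x : {x : Box r m // InDiag lam x}) : ℕ :=
  ((r - 1 - (x.1.1 : ℕ)) * (size lam + 1) + (size lam - x.1.2.2)) * (Finset.univ.sup m + 1)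
    + (x.1.2.1 : ℕ)

private lemma lex_lt' {B a1 a2 b1 b2 : ℕ} (ha : a2 < a1) (hb : b2 ≤ B) :
    a2 * (B + 1) + b2 < a1 * (B + 1) + b1 := by
  have h1 : a2 * (B + 1) + b2 < (a2 + 1) * (B + 1) := by
    rw [Nat.succ_mul]
    omega
  have h2 : (a2 + 1) * (B + 1) ≤ a1 * (B + 1) := Nat.mul_le_mul_right _ ha
  omega

lemma rkey_lt (lam : MComp r m) (x y : {x : Box r m // InDiag lam x})
    (h : (x.1.1 : ℕ) < (y.1.1 : ℕ) ∨
      ((y.1.1 : ℕ) = (x.1.1 : ℕ) ∧ (x.1.2.2 < y.1.2.2 ∨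
        (y.1.2.2 = x.1.2.2 ∧ (y.1.2.1 : ℕ) < (x.1.2.1 : ℕ))))) :
    rkey lam y < rkey lam x := by
  have hby := col_lt_size lam y
  have hbx := col_lt_size lam x
  have hry : (y.1.2.1 : ℕ) ≤ Finset.univ.sup m :=
    le_trans (le_of_lt y.1.2.1.isLt) (Finset.le_sup (Finset.mem_univ _))
  have hcy := y.1.1.isLt
  unfold rkey
  rcases h with h | ⟨hc, h⟩
  · exact lex_lt' (lex_lt' (by omega) (by omega)) hry
  · rw [hc]
    rcases h with h | ⟨hj, hi⟩
    · exact lex_lt' (by omega) hry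
    · rw [hj]
      exact Nat.add_lt_add_left hi _

lemma row_of_singular (lam mu : MComp r m) (hlam : IsMPartition lam)
    (T : {x : Box r m // InDiag lam x} → Entry r m)
    (hSST : IsSST (InDiag lam) mu T) (hSing : IsSingular (InDiag lam) T)
    (hcomp : ∀ x, (T x).1 = x.1.1) :
    ∀ x, ((T x).2 : ℕ) = (x.1.2.1 : ℕ) := by
  haveI := finite_diag lam
  suffices h : ∀ N (x : {x : Box r m // InDiag lam x}),
      rkey lam x < N → ((T x).2 : ℕ) = (x.1.2.1 : ℕ) by
    exact fun x => h (rkey lam x + 1) x (Nat.lt_succ_self _)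
  intro N
  induction N with
  | zero => exact fun x hx => absurd hx (Nat.not_lt_zero _)
  | succ N IH =>
    intro x hx
    rcases Nat.lt_or_ge (rkey lam x) N with hlt | hge
    · exact IH x hlt
    have IH' : ∀ y, rkey lam y < rkey lam x → ((T y).2 : ℕ) = (y.1.2.1 : ℕ) :=
      fun y hy => IH y (by omega)
    clear IH hx hge
    obtain ⟨⟨k, i, j⟩, hxd⟩ := x
    have hxd' : j < lam k i := hxd
    show ((T ⟨⟨k, i, j⟩, hxd⟩).2 : ℕ) = (i : ℕ)
    have hc2 := hcomp ⟨⟨k, i, j⟩, hxd⟩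
    -- lower bound
    have hlow : (i : ℕ) ≤ ((T ⟨⟨k, i, j⟩, hxd⟩).2 : ℕ) := by
      rcases Nat.eq_zero_or_pos (i : ℕ) with h0 | h0
      · omega
      · have hi' : (i : ℕ) - 1 < m k := by
          have := i.isLt
          omega
        have hle : (⟨(i : ℕ) - 1, hi'⟩ : Fin (m k)) ≤ i := Fin.le_def.mpr (Nat.sub_le _ _)
        have hxd2 : InDiag lam ⟨k, ⟨(i : ℕ) - 1, hi'⟩, j⟩ := lt_of_lt_of_le hxd' (hlam k hle)
        have hkey : rkey lam ⟨⟨k, ⟨(i : ℕ) - 1, hi'⟩, j⟩, hxd2⟩ < rkey lam ⟨⟨k, i, j⟩, hxd⟩ :=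
          rkey_lt _ _ _ (Or.inr ⟨rfl, Or.inr ⟨rfl, by
            show (i : ℕ) - 1 < (i : ℕ)
            omega⟩⟩)
        have hrow' := IH' _ hkey
        have hv : ((⟨(i : ℕ) - 1, hi'⟩ : Fin (m k)) : ℕ) = (i : ℕ) - 1 := rfl
        have hcs := hSST.col_strict ⟨⟨k, ⟨(i : ℕ) - 1, hi'⟩, j⟩, hxd2⟩ ⟨⟨k, i, j⟩, hxd⟩ rfl
          (by
            show (i : ℕ) - 1 + 1 = (i : ℕ)
            omega) rfl
        have hc1 := hcomp ⟨⟨k, ⟨(i : ℕ) - 1, hi'⟩, j⟩, hxd2⟩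
        rcases hcs with h | ⟨-, h⟩
        · rw [hc1, hc2] at h
          exact absurd h (lt_irrefl _)
        · dsimp only at hrow'
          omega
    by_contra hne2
    have hgt : (i : ℕ) + 1 ≤ ((T ⟨⟨k, i, j⟩, hxd⟩).2 : ℕ) := by omega
    have hsing := hSing ⟨⟨k, i, j⟩, hxd⟩ (((T ⟨⟨k, i, j⟩, hxd⟩).2 : ℕ) - 1)
    have hpos : 0 < Nat.card {y : {x : Box r m // InDiag lam x} //
        (T y).1 = (T ⟨⟨k, i, j⟩, hxd⟩).1 ∧
        BoxGE y.1 (⟨⟨k, i, j⟩, hxd⟩ : {x : Box r m // InDiag lam x}).1 ∧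
        ((T y).2 : ℕ) = ((T ⟨⟨k, i, j⟩, hxd⟩).2 : ℕ) - 1 + 1} := by
      haveI : Nonempty {y : {x : Box r m // InDiag lam x} //
          (T y).1 = (T ⟨⟨k, i, j⟩, hxd⟩).1 ∧
          BoxGE y.1 (⟨⟨k, i, j⟩, hxd⟩ : {x : Box r m // InDiag lam x}).1 ∧
          ((T y).2 : ℕ) = ((T ⟨⟨k, i, j⟩, hxd⟩).2 : ℕ) - 1 + 1} :=
        ⟨⟨⟨⟨k, i, j⟩, hxd⟩, rfl, Or.inr ⟨rfl, Or.inr ⟨rfl, le_refl _⟩⟩, by omega⟩⟩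
      exact Nat.card_pos
    have hne0 : Nat.card {y : {x : Box r m // InDiag lam x} //
        (T y).1 = (T ⟨⟨k, i, j⟩, hxd⟩).1 ∧
        BoxGE y.1 (⟨⟨k, i, j⟩, hxd⟩ : {x : Box r m // InDiag lam x}).1 ∧
        ((T y).2 : ℕ) = ((T ⟨⟨k, i, j⟩, hxd⟩).2 : ℕ) - 1} ≠ 0 := by omega
    obtain ⟨⟨y, hy1, hy2, hy3⟩, -⟩ := Nat.card_ne_zero.mp hne0
    have hcy := hcomp y
    rw [hcy, hc2] at hy1
    obtain ⟨⟨ky, iy, jy⟩, hyd⟩ := y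
    have hky : k = ky := hy1.symm
    subst hky
    have hy2' : j < jy ∨ (jy = j ∧ (iy : ℕ) ≤ (i : ℕ)) := by
      rcases hy2 with h | ⟨-, h⟩
      · exact absurd h (lt_irrefl _)
      · exact h
    rcases hy2' with hcolgt | ⟨hje, hile⟩
    · have hklt : rkey lam ⟨⟨k, iy, jy⟩, hyd⟩ < rkey lam ⟨⟨k, i, j⟩, hxd⟩ :=
        rkey_lt _ _ _ (Or.inr ⟨rfl, Or.inl hcolgt⟩)
      have hyr := IH' _ hklt
      dsimp only at hyr
      have hile2 : i ≤ iy := Fin.le_def.mpr (by omega)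
      have hzd : InDiag lam ⟨k, i, j + 1⟩ := by
        have h1 : lam k iy ≤ lam k i := hlam k hile2
        have h2 : jy < lam k iy := hyd
        show j + 1 < lam k i
        omega
      have hklt2 : rkey lam ⟨⟨k, i, j + 1⟩, hzd⟩ < rkey lam ⟨⟨k, i, j⟩, hxd⟩ :=
        rkey_lt _ _ _ (Or.inr ⟨rfl, Or.inl (Nat.lt_succ_self j)⟩)
      have hzr := IH' _ hklt2
      dsimp only at hzr
      have hrw := hSST.row_weak ⟨⟨k, i, j⟩, hxd⟩ ⟨⟨k, i, j + 1⟩, hzd⟩ rfl rfl rfl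
      have hcz := hcomp ⟨⟨k, i, j + 1⟩, hzd⟩
      rcases hrw with h | ⟨-, h⟩
      · rw [hc2, hcz] at h
        exact absurd h (lt_irrefl _)
      · omega
    · have hje' : j = jy := hje.symm
      subst hje'
      rcases Nat.lt_or_ge (iy : ℕ) (i : ℕ) with hlt2 | hge2
      · have hklt : rkey lam ⟨⟨k, iy, j⟩, hyd⟩ < rkey lam ⟨⟨k, i, j⟩, hxd⟩ :=
          rkey_lt _ _ _ (Or.inr ⟨rfl, Or.inr ⟨rfl, hlt2⟩⟩)
        have hyr := IH' _ hklt
        dsimp only at hyr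
        omega
      · have hieq : iy = i := Fin.val_injective (le_antisymm hile hge2)
        subst hieq
        have hyx : (⟨⟨k, iy, j⟩, hyd⟩ : {x : Box r m // InDiag lam x}) = ⟨⟨k, iy, j⟩, hxd⟩ := rfl
        rw [hyx] at hy3
        omega

/-- For `r`-partitions `λ ≠ μ` of size `n` with `ζ(λ) = ζ(μ)`, one has `β_{λμ} = 0`. -/
theorem beta_eq_zero_of_zeta_eq (r n : ℕ) (hr : 1 ≤ r) (m : Fin r → ℕ) (hm : ∀ k, n ≤ m k)
    (lam mu : MComp r m) (hlam : IsMPartition lam) (hlams : size lam = n)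
    (hmu : IsMPartition mu) (hmus : size mu = n)
    (hne : lam ≠ mu) (hz : zeta lam = zeta mu) :
    beta lam mu = 0 := by
  classical
  haveI := finite_diag lam
  have hempty : IsEmpty {T : {x : Box r m // InDiag lam x} → Entry r m //
      IsSST (InDiag lam) mu T ∧ IsSingular (InDiag lam) T} := by
    constructor
    rintro ⟨T, hSST, hSing⟩
    have hcomp : ∀ x : {x : Box r m // InDiag lam x}, (T x).1 = x.1.1 := by
      intro x
      have key : ∀ c : Fin r,
          {z : {x : Box r m // InDiag lam x} | ((T z).1 : ℕ) ≤ (c : ℕ)} =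
          {z : {x : Box r m // InDiag lam x} | (z.1.1 : ℕ) ≤ (c : ℕ)} := by
        intro c
        apply Set.eq_of_subset_of_ncard_le
        · exact fun z hz => le_trans (hSST.comp_le z) hz
        · apply le_of_eq
          rw [← Nat.card_coe_set_eq, ← Nat.card_coe_set_eq]
          have h1 : Nat.card {z : {x : Box r m // InDiag lam x} // (z.1.1 : ℕ) ≤ (c : ℕ)} =
              ∑ k ∈ Finset.univ.filter (fun k : Fin r => (k : ℕ) ≤ (c : ℕ)), ∑ i, lam k i :=
            (Nat.card_congr (Equiv.subtypeSubtypeEquivSubtypeInter (InDiag lam)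
              (fun b : Box r m => (b.1 : ℕ) ≤ (c : ℕ)))).trans
              (card_diag_filter lam (fun k : Fin r => (k : ℕ) ≤ (c : ℕ)))
          have h2 : Nat.card {z : {x : Box r m // InDiag lam x} // ((T z).1 : ℕ) ≤ (c : ℕ)} =
              ∑ k ∈ Finset.univ.filter (fun k : Fin r => (k : ℕ) ≤ (c : ℕ)), ∑ a, mu k a :=
            card_entry_filter lam mu T hSST.weight (fun k : Fin r => (k : ℕ) ≤ (c : ℕ))
          have h3 : ∀ k : Fin r, (∑ i, lam k i) = ∑ a, mu k a := by
            intro k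
            have := congrFun hz k
            simpa [zeta] using this
          show Nat.card {z : {x : Box r m // InDiag lam x} // (z.1.1 : ℕ) ≤ (c : ℕ)} =
            Nat.card {z : {x : Box r m // InDiag lam x} // ((T z).1 : ℕ) ≤ (c : ℕ)}
          rw [h1, h2]
          exact Finset.sum_congr rfl (fun k _ => h3 k)
        · exact Set.toFinite _
      have hmem : ((T x).1 : ℕ) ≤ (x.1.1 : ℕ) := by
        have h := key x.1.1
        have hx : x ∈ {z : {x : Box r m // InDiag lam x} | (z.1.1 : ℕ) ≤ ((x.1.1 : Fin r) : ℕ)} :=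
          by show ((x.1.1 : Fin r) : ℕ) ≤ ((x.1.1 : Fin r) : ℕ); exact le_refl _
        rw [← h] at hx
        exact hx
      exact Fin.val_injective (le_antisymm hmem (hSST.comp_le x))
    have hrow := row_of_singular lam mu hlam T hSST hSing hcomp
    have hcard : ∀ (k : Fin r) (a : Fin (m k)),
        Nat.card {x : {x : Box r m // InDiag lam x} // T x = ⟨k, a⟩} = lam k a := by
      intro k a
      have e : {x : {x : Box r m // InDiag lam x} // T x = ⟨k, a⟩} ≃ {j : ℕ // j < lam k a} := by
        refine ⟨fun x => ⟨x.1.1.2.2, ?_⟩,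
          fun jv => ⟨⟨⟨k, a, jv.1⟩, jv.2⟩, entry_ext (hcomp _) (hrow _)⟩, ?_, ?_⟩
        · obtain ⟨⟨⟨c, ii, jj⟩, hD⟩, hT⟩ := x
          have hc : c = k := by
            have h := hcomp ⟨⟨c, ii, jj⟩, hD⟩
            rw [hT] at h
            exact h.symm
          subst hc
          have hii : ii = a := by
            have h2 := hrow ⟨⟨c, ii, jj⟩, hD⟩
            rw [hT] at h2
            dsimp only at h2
            exact Fin.val_injective h2.symm
          subst hii
          exact hD
        · intro x
          obtain ⟨⟨⟨c, ii, jj⟩, hD⟩, hT⟩ := x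
          have hc : c = k := by
            have h := hcomp ⟨⟨c, ii, jj⟩, hD⟩
            rw [hT] at h
            exact h.symm
          subst hc
          have hii : ii = a := by
            have h2 := hrow ⟨⟨c, ii, jj⟩, hD⟩
            rw [hT] at h2
            dsimp only at h2
            exact Fin.val_injective h2.symm
          subst hii
          rfl
        · intro jv
          rfl
      rw [Nat.card_congr e, Nat.card_congr (Fin.equivSubtype).symm, Nat.card_eq_fintype_card,
        Fintype.card_fin]
    exact hne (funext fun k => funext fun a => ((hSST.weight ⟨k, a⟩).trans (hcard k a)).symm)
  unfold beta nSingSST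
  exact @Nat.card_of_isEmpty _ hempty


end CQSA
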